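/- arXiv:2310.06187 — 4 statements merged into one kernel-verified Lean document; each statement's English description precedes it below -/
import Mathlib

section
/- Let b̃, b̂ : ℕ → ℝ be sequences of nonnegative reals and let c be a function assigning a nonnegative real number c(α,β) to every pair of multi-indices (α,β). Suppose that for all multi-indices α, β with |α| + |β| ≥ 1 the recursive inequality c(α,β) ≤ ∑_{j : α_j ≠ 0} α_j b̃_j c(α − e_j, β) + ∑_{k : β_k ≠ 0} β_k b̂_k c(α, β − e_k) holds. Then for all multi-indices α, β one has c(α,β) ≤ (|α| + |β|)! · b̃^α · b̂^β · c(0,0). -/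
open scoped BigOperators

private lemma sum_eq_zero_finsupp {γ : ℕ →₀ ℕ} (h : (γ.sum fun _ n => n) = 0) : γ = 0 := by
  ext j
  simp only [Finsupp.coe_zero, Pi.zero_apply]
  by_contra hj
  have hmem : j ∈ γ.support := Finsupp.mem_support_iff.mpr hj
  have h2 : γ j ≤ ∑ i ∈ γ.support, γ i :=
    Finset.single_le_sum (f := fun i => γ i) (fun i _ => Nat.zero_le _) hmem
  simp only [Finsupp.sum] at h
  omega

private lemma sub_single_sum {γ : ℕ →₀ ℕ} {j : ℕ} (hj : γ j ≠ 0) :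
    ((γ - Finsupp.single j 1).sum fun _ n => n) + 1 = γ.sum fun _ n => n := by
  have hle : Finsupp.single j 1 ≤ γ := Finsupp.single_le_iff.mpr (Nat.one_le_iff_ne_zero.mpr hj)
  have hγ : γ - Finsupp.single j 1 + Finsupp.single j 1 = γ := tsub_add_cancel_of_le hle
  conv_rhs => rw [← hγ]
  rw [Finsupp.sum_add_index' (fun _ => rfl) (fun _ _ _ => rfl)]
  simp [Finsupp.sum_single_index]

private lemma sub_single_prod (b : ℕ → ℝ) {γ : ℕ →₀ ℕ} {j : ℕ} (hj : γ j ≠ 0) :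
    b j * ((γ - Finsupp.single j 1).prod fun i n => b i ^ n) = γ.prod fun i n => b i ^ n := by
  have hle : Finsupp.single j 1 ≤ γ := Finsupp.single_le_iff.mpr (Nat.one_le_iff_ne_zero.mpr hj)
  have hγ : γ - Finsupp.single j 1 + Finsupp.single j 1 = γ := tsub_add_cancel_of_le hle
  conv_rhs => rw [← hγ]
  rw [Finsupp.prod_add_index' (fun i => pow_zero (b i)) (fun i m n => pow_add (b i) m n),
    Finsupp.prod_single_index (a := j) (b := 1)]
  · ring
  · exact pow_zero _

/-- The combinatorial induction underlying the parametric regularity bound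
(Theorem 3.3): if `c(α,β)` satisfies the recursive inequality
`c(α,β) ≤ ∑_j α_j b̃_j c(α-e_j,β) + ∑_k β_k b̂_k c(α,β-e_k)` whenever
`|α|+|β| ≥ 1`, then `c(α,β) ≤ (|α|+|β|)! b̃^α b̂^β c(0,0)`. -/
theorem multiindex_recursion_two_families
    (bt bh : ℕ → ℝ) (hbt : ∀ j, 0 ≤ bt j) (hbh : ∀ j, 0 ≤ bh j)
    (c : (ℕ →₀ ℕ) → (ℕ →₀ ℕ) → ℝ)
    (hc : ∀ α β, 0 ≤ c α β)
    (hrec : ∀ α β : ℕ →₀ ℕ,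
      1 ≤ (α.sum fun _ n => n) + (β.sum fun _ n => n) →
      c α β ≤
        (∑ j ∈ α.support, (α j : ℝ) * bt j * c (α - Finsupp.single j 1) β) +
        (∑ k ∈ β.support, (β k : ℝ) * bh k * c α (β - Finsupp.single k 1))) :
    ∀ α β : ℕ →₀ ℕ,
      c α β ≤
        (((α.sum fun _ n => n) + (β.sum fun _ n => n)).factorial : ℝ) *
          (∏ j ∈ α.support, bt j ^ α j) * (∏ k ∈ β.support, bh k ^ β k) *
          c 0 0 := by
  suffices H : ∀ n : ℕ, ∀ α β : ℕ →₀ ℕ,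
      (α.sum fun _ n => n) + (β.sum fun _ n => n) = n →
      c α β ≤ (n.factorial : ℝ) * (α.prod fun j m => bt j ^ m) *
        (β.prod fun k m => bh k ^ m) * c 0 0 by
    intro α β
    exact H _ α β rfl
  intro n
  induction n using Nat.strong_induction_on with
  | _ n ih =>
    intro α β hn
    have hPα : 0 ≤ α.prod fun j m => bt j ^ m :=
      Finset.prod_nonneg fun i _ => pow_nonneg (hbt i) _
    have hQβ : 0 ≤ β.prod fun k m => bh k ^ m :=
      Finset.prod_nonneg fun i _ => pow_nonneg (hbh i) _
    rcases Nat.eq_zero_or_pos n with h0 | hpos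
    · subst h0
      have hα : α = 0 := sum_eq_zero_finsupp (by omega)
      have hβ : β = 0 := sum_eq_zero_finsupp (by omega)
      subst hα; subst hβ
      simp
    · obtain ⟨m, rfl⟩ := Nat.exists_eq_succ_of_ne_zero (Nat.pos_iff_ne_zero.mp hpos)
      have h1 : 1 ≤ (α.sum fun _ n => n) + (β.sum fun _ n => n) := by omega
      refine (hrec α β h1).trans ?_
      set K : ℝ := (m.factorial : ℝ) * (α.prod fun j m => bt j ^ m) *
        (β.prod fun k m => bh k ^ m) * c 0 0 with hK
      have hK0 : 0 ≤ K := by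
        have := hc 0 0
        positivity
      have key1 : ∑ j ∈ α.support, (α j : ℝ) * bt j * c (α - Finsupp.single j 1) β
          ≤ ∑ j ∈ α.support, (α j : ℝ) * K := by
        refine Finset.sum_le_sum fun j hj => ?_
        have hj' : α j ≠ 0 := Finsupp.mem_support_iff.mp hj
        have hsum := sub_single_sum (γ := α) hj'
        have hsub := ih m (Nat.lt_succ_self m) (α - Finsupp.single j 1) β (by omega)
        calc (α j : ℝ) * bt j * c (α - Finsupp.single j 1) β
            ≤ (α j : ℝ) * bt j * ((m.factorial : ℝ) *
              ((α - Finsupp.single j 1).prod fun i n => bt i ^ n) *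
              (β.prod fun k m => bh k ^ m) * c 0 0) := by
              exact mul_le_mul_of_nonneg_left hsub
                (mul_nonneg (Nat.cast_nonneg _) (hbt j))
          _ = (α j : ℝ) * K := by
              rw [hK, ← sub_single_prod bt hj']
              ring
      have key2 : ∑ k ∈ β.support, (β k : ℝ) * bh k * c α (β - Finsupp.single k 1)
          ≤ ∑ k ∈ β.support, (β k : ℝ) * K := by
        refine Finset.sum_le_sum fun k hk => ?_
        have hk' : β k ≠ 0 := Finsupp.mem_support_iff.mp hk
        have hsum := sub_single_sum (γ := β) hk'
        have hsub := ih m (Nat.lt_succ_self m) α (β - Finsupp.single k 1) (by omega)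
        calc (β k : ℝ) * bh k * c α (β - Finsupp.single k 1)
            ≤ (β k : ℝ) * bh k * ((m.factorial : ℝ) *
              (α.prod fun j m => bt j ^ m) *
              ((β - Finsupp.single k 1).prod fun i n => bh i ^ n) * c 0 0) := by
              exact mul_le_mul_of_nonneg_left hsub
                (mul_nonneg (Nat.cast_nonneg _) (hbh k))
          _ = (β k : ℝ) * K := by
              rw [hK, ← sub_single_prod bh hk']
              ring
      have hsum1 : ∑ j ∈ α.support, (α j : ℝ) * K = ((α.sum fun _ n => n : ℕ) : ℝ) * K := by
        rw [← Finset.sum_mul]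
        congr 1
        simp [Finsupp.sum, Nat.cast_sum]
      have hsum2 : ∑ k ∈ β.support, (β k : ℝ) * K = ((β.sum fun _ n => n : ℕ) : ℝ) * K := by
        rw [← Finset.sum_mul]
        congr 1
        simp [Finsupp.sum, Nat.cast_sum]
      calc (∑ j ∈ α.support, (α j : ℝ) * bt j * c (α - Finsupp.single j 1) β) +
            (∑ k ∈ β.support, (β k : ℝ) * bh k * c α (β - Finsupp.single k 1))
          ≤ ((α.sum fun _ n => n : ℕ) : ℝ) * K + ((β.sum fun _ n => n : ℕ) : ℝ) * K := by
            rw [← hsum1, ← hsum2]; exact add_le_add key1 key2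
        _ = ((m + 1 : ℕ) : ℝ) * K := by
            rw [← add_mul]
            congr 1
            rw [← Nat.cast_add, hn]
        _ = ((m + 1).factorial : ℝ) * (α.prod fun j m => bt j ^ m) *
            (β.prod fun k m => bh k ^ m) * c 0 0 := by
            rw [hK, Nat.factorial_succ, Nat.cast_mul]
            ring
end

section
/- Let b̃ : ℕ → ℝ be a sequence of nonnegative reals and let c be a function assigning a nonnegative real number c(α) to every multi-index α. Suppose that for every multi-index α with |α| ≥ 1 one has c(α) ≤ ∑_{j : α_j ≠ 0} α_j b̃_j c(α − e_j). Then for every multi-index α, c(α) ≤ |α|! · b̃^α · c(0). -/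
open scoped BigOperators

lemma aux_sum (α : ℕ →₀ ℕ) (j : ℕ) (hj : j ∈ α.support) :
    ((α - Finsupp.single j 1).sum fun _ n => n) + 1 = (α.sum fun _ n => n) := by
  classical
  set β := α - Finsupp.single j 1 with hβ
  have hβa : ∀ i, β i = α i - (if i = j then 1 else 0) := by
    intro i
    simp [hβ, Finsupp.tsub_apply, Finsupp.single_apply, eq_comm]
  have hsub : β.support ⊆ α.support := Finsupp.support_tsub
  have h1 : (β.sum fun _ n => n) = ∑ i ∈ α.support, β i := by
    rw [Finsupp.sum]
    exact Finset.sum_subset hsub (fun x _ hx => Finsupp.notMem_support_iff.mp hx)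
  have h2 : (α.sum fun _ n => n) = ∑ i ∈ α.support, α i := rfl
  have hαj : 1 ≤ α j := Nat.one_le_iff_ne_zero.mpr (Finsupp.mem_support_iff.mp hj)
  rw [h1, h2, ← Finset.add_sum_erase _ _ hj, ← Finset.add_sum_erase _ _ hj]
  have : ∑ i ∈ α.support.erase j, β i = ∑ i ∈ α.support.erase j, α i := by
    apply Finset.sum_congr rfl
    intro i hi
    rw [hβa i, if_neg (Finset.ne_of_mem_erase hi), Nat.sub_zero]
  rw [this, hβa j, if_pos rfl]
  omega

lemma aux_prod (bt : ℕ → ℝ) (α : ℕ →₀ ℕ) (j : ℕ) (hj : j ∈ α.support) :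
    bt j * ((α - Finsupp.single j 1).prod fun i n => bt i ^ n)
      = ∏ i ∈ α.support, bt i ^ α i := by
  classical
  set β := α - Finsupp.single j 1 with hβ
  have hβa : ∀ i, β i = α i - (if i = j then 1 else 0) := by
    intro i
    simp [hβ, Finsupp.tsub_apply, Finsupp.single_apply, eq_comm]
  have hsub : β.support ⊆ α.support := Finsupp.support_tsub
  have h1 : (β.prod fun i n => bt i ^ n) = ∏ i ∈ α.support, bt i ^ β i := by
    rw [Finsupp.prod]
    apply Finset.prod_subset hsub
    intro x _ hx
    rw [Finsupp.notMem_support_iff.mp hx, pow_zero]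
  have hαj : 1 ≤ α j := Nat.one_le_iff_ne_zero.mpr (Finsupp.mem_support_iff.mp hj)
  rw [h1, ← Finset.mul_prod_erase _ _ hj, ← Finset.mul_prod_erase _ _ hj, ← mul_assoc]
  congr 1
  · rw [hβa j, if_pos rfl, ← pow_succ']
    congr 1
    omega
  · apply Finset.prod_congr rfl
    intro i hi
    rw [hβa i, if_neg (Finset.ne_of_mem_erase hi), Nat.sub_zero]

/-- The single-family case of the multi-index recursion in the proof of
Theorem 3.3: if `c(α) ≤ ∑_{j : α_j ≠ 0} α_j b̃_j c(α - e_j)` whenever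
`|α| ≥ 1`, then `c(α) ≤ |α|! b̃^α c(0)`. -/
theorem multiindex_recursion_single_family
    (bt : ℕ → ℝ) (hbt : ∀ j, 0 ≤ bt j)
    (c : (ℕ →₀ ℕ) → ℝ)
    (hc : ∀ α, 0 ≤ c α)
    (hrec : ∀ α : ℕ →₀ ℕ, 1 ≤ (α.sum fun _ n => n) →
      c α ≤ ∑ j ∈ α.support, (α j : ℝ) * bt j * c (α - Finsupp.single j 1)) :
    ∀ α : ℕ →₀ ℕ,
      c α ≤ ((α.sum fun _ n => n).factorial : ℝ) *
        (∏ j ∈ α.support, bt j ^ α j) * c 0 := by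
  classical
  have key : ∀ n : ℕ, ∀ α : ℕ →₀ ℕ, (α.sum fun _ n => n) = n →
      c α ≤ ((α.sum fun _ n => n).factorial : ℝ) *
        (∏ j ∈ α.support, bt j ^ α j) * c 0 := by
    intro n
    induction n using Nat.strong_induction_on with
    | _ n IH =>
      intro α hN
      rcases Nat.eq_zero_or_pos n with h0 | hpos
      · subst h0
        have : α = 0 := by
          ext i
          simp only [Finsupp.coe_zero, Pi.zero_apply]
          by_contra hi
          have hi' : i ∈ α.support := Finsupp.mem_support_iff.mpr hi
          have : α i ≤ α.sum fun _ n => n :=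
            Finset.single_le_sum (f := fun i => α i) (fun _ _ => Nat.zero_le _) hi'
          rw [hN] at this
          omega
        subst this
        simp
      · have hpos' : 1 ≤ (α.sum fun _ n => n) := by omega
        have hsub_sum : ∀ j ∈ α.support,
            ((α - Finsupp.single j 1).sum fun _ n => n) = n - 1 := by
          intro j hj
          have := aux_sum α j hj
          omega
        calc c α ≤ ∑ j ∈ α.support, (α j : ℝ) * bt j * c (α - Finsupp.single j 1) :=
              hrec α hpos'
          _ ≤ ∑ j ∈ α.support, (α j : ℝ) * bt j *
                (((n - 1).factorial : ℝ) *
                  ((α - Finsupp.single j 1).prod fun i m => bt i ^ m) * c 0) := by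
              apply Finset.sum_le_sum
              intro j hj
              have hle := IH (n - 1) (by omega) (α - Finsupp.single j 1) (hsub_sum j hj)
              rw [hsub_sum j hj] at hle
              exact mul_le_mul_of_nonneg_left hle
                (mul_nonneg (Nat.cast_nonneg _) (hbt j))
          _ = ∑ j ∈ α.support, (α j : ℝ) *
                (((n - 1).factorial : ℝ) * (∏ i ∈ α.support, bt i ^ α i) * c 0) := by
              apply Finset.sum_congr rfl
              intro j hj
              rw [← aux_prod bt α j hj]
              ring
          _ = ((n : ℝ)) * (((n - 1).factorial : ℝ) * (∏ i ∈ α.support, bt i ^ α i) * c 0) := by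
              rw [← Finset.sum_mul]
              congr 1
              rw [← hN, Finsupp.sum]
              push_cast
              rfl
          _ = ((α.sum fun _ m => m).factorial : ℝ) * (∏ j ∈ α.support, bt j ^ α j) * c 0 := by
              rw [hN]
              have : (n : ℝ) * ((n - 1).factorial : ℝ) = (n.factorial : ℝ) := by
                have h := Nat.mul_factorial_pred hpos.ne'
                push_cast [← h]
                ring
              rw [← mul_assoc, ← mul_assoc, this]
  intro α
  exact key _ α rfl
end

section
/- Let b > 1 and ϑ > 0 be reals and C₀ ≥ 0. Let Q : ℕ × ℕ → ℝ satisfy Q(j,0) = 0 and Q(0,k) = 0 for all j, k ≥ 0, and suppose that for all j, k ≥ 1: |Q(j,k) − Q(j,k−1)| ≤ C₀ b^{−(k−1)ϑ} and |Q(j,k) − Q(j−1,k)| ≤ C₀ b^{−(j−1)ϑ}. Suppose moreover that there exists I ∈ ℝ such that Q(j,k) → I as j, k → ∞ (for every ε > 0 there is M with |Q(j,k) − I| ≤ ε whenever j, k ≥ M). Then there exists a constant C depending only on b, ϑ and C₀ such that for every integer L ≥ 2, | I − ∑_{k=1}^{L−1} ( Q(L−k, k) − Q(L−k, k−1) ) |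 ≤ C b^{−Lϑ/2}. -/
open scoped BigOperators

namespace QmcSparseAux

open Finset

/-- Mixed second difference of a double sequence, in shifted coordinates. -/
def Dd (Q : ℕ → ℕ → ℝ) (a c : ℕ) : ℝ :=
  Q (a + 1) (c + 1) - Q a (c + 1) - Q (a + 1) c + Q a c

lemma inner_sum (Q : ℕ → ℕ → ℝ) (hQ0 : ∀ j, Q j 0 = 0) (a k : ℕ) :
    ∑ c ∈ range k, Dd Q a c = Q (a + 1) k - Q a k := by
  have h := Finset.sum_range_sub (fun c => Q (a + 1) c - Q a c) k
  simp only [hQ0, sub_zero] at h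
  calc ∑ c ∈ range k, Dd Q a c
      = ∑ c ∈ range k,
          ((Q (a + 1) (c + 1) - Q a (c + 1)) - (Q (a + 1) c - Q a c)) := by
        refine Finset.sum_congr rfl fun c _ => ?_
        simp only [Dd]; ring
    _ = Q (a + 1) k - Q a k := by rw [h]

lemma sumD (Q : ℕ → ℕ → ℝ) (hQ0 : ∀ j, Q j 0 = 0) (h0Q : ∀ k, Q 0 k = 0) (j k : ℕ) :
    ∑ a ∈ range j, ∑ c ∈ range k, Dd Q a c = Q j k := by
  have h := Finset.sum_range_sub (fun a => Q a k) j
  simp only [h0Q, sub_zero] at h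
  calc ∑ a ∈ range j, ∑ c ∈ range k, Dd Q a c
      = ∑ a ∈ range j, (Q (a + 1) k - Q a k) := by
        refine Finset.sum_congr rfl fun a _ => inner_sum Q hQ0 a k
    _ = Q j k := h

lemma comb_eq (Q : ℕ → ℕ → ℝ) (hQ0 : ∀ j, Q j 0 = 0) (h0Q : ∀ k, Q 0 k = 0)
    (L N : ℕ) (hL : 2 ≤ L) (hN : L ≤ N) :
    ∑ k ∈ Finset.Icc 1 (L - 1), (Q (L - k) k - Q (L - k) (k - 1)) =
      ∑ p ∈ (range N ×ˢ range N).filter (fun p => p.1 + p.2 + 2 ≤ L),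
        Dd Q p.1 p.2 := by
  -- rewrite the RHS as an iterated sum over a triangle
  have hRHS : ∑ p ∈ (range N ×ˢ range N).filter (fun p => p.1 + p.2 + 2 ≤ L),
      Dd Q p.1 p.2
      = ∑ c ∈ range (L - 1), ∑ a ∈ range (L - 1 - c), Dd Q a c := by
    rw [Finset.sum_filter, Finset.sum_product_right]
    have step : ∀ c ∈ range N,
        (∑ a ∈ range N, if a + c + 2 ≤ L then Dd Q a c else 0)
          = ∑ a ∈ range (L - 1 - c), Dd Q a c := by
      intro c _
      rw [← Finset.sum_filter]
      congr 1
      ext a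
      simp only [Finset.mem_filter, Finset.mem_range]
      omega
    rw [Finset.sum_congr rfl step]
    symm
    apply Finset.sum_subset
    · intro c hc
      simp only [Finset.mem_range] at hc ⊢
      omega
    · intro c _ hc
      simp only [Finset.mem_range, not_lt] at hc
      have : L - 1 - c = 0 := by omega
      simp [this]
  rw [hRHS]
  -- rewrite the LHS
  have hIcc : Finset.Icc 1 (L - 1) = Finset.Ico 1 L := by
    rw [← Finset.Ico_add_one_right_eq_Icc]
    congr 1
    omega
  rw [hIcc, Finset.sum_Ico_eq_sum_range]
  refine Finset.sum_congr rfl fun c hc => ?_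
  simp only [Finset.mem_range] at hc
  have h1 : 1 + c - 1 = c := by omega
  have h2 : L - (1 + c) = L - 1 - c := by omega
  rw [h1, h2]
  have h := Finset.sum_range_sub (fun a => Q a (1 + c) - Q a c) (L - 1 - c)
  simp only [h0Q, sub_zero, sub_self] at h
  have : ∑ a ∈ range (L - 1 - c), Dd Q a c
      = ∑ a ∈ range (L - 1 - c),
          ((Q (a + 1) (1 + c) - Q (a + 1) c) - (Q a (1 + c) - Q a c)) := by
    refine Finset.sum_congr rfl fun a _ => ?_
    simp only [Dd]
    have : c + 1 = 1 + c := by omega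
    rw [this]; ring
  rw [this, h]

lemma geom_le (y : ℝ) (hy0 : 0 ≤ y) (hy1 : y < 1) (n : ℕ) :
    ∑ i ∈ range n, y ^ i ≤ 1 / (1 - y) := by
  rw [geom_sum_eq (ne_of_lt hy1) n, div_le_iff_of_neg (by linarith : y - 1 < 0)]
  have hne : (1:ℝ) - y ≠ 0 := by linarith
  have h1 : 1 / (1 - y) * (y - 1) = -1 := by
    rw [div_mul_eq_mul_div, one_mul, div_eq_iff hne]
    ring
  rw [h1]
  have hpow : 0 ≤ y ^ n := pow_nonneg hy0 n
  linarith

/-- Tail bound for one half (`p.2 ≤ p.1`) of the region. -/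
lemma half_bound (y : ℝ) (hy0 : 0 < y) (hy1 : y < 1) (C₀ : ℝ) (hC₀ : 0 ≤ C₀)
    (D : ℕ → ℕ → ℝ) (hD : ∀ a c, c ≤ a → |D a c| ≤ 2 * C₀ * (y ^ 2) ^ a)
    (L N : ℕ) (hL : 2 ≤ L) :
    ∑ p ∈ ((range N ×ˢ range N).filter (fun p => ¬(p.1 + p.2 + 2 ≤ L))).filter
        (fun p => p.2 ≤ p.1), |D p.1 p.2|
      ≤ 2 * C₀ * (1 / (1 - y)) ^ 2 * y ^ (L - 1) := by
  set R := ((range N ×ˢ range N).filter (fun p => ¬(p.1 + p.2 + 2 ≤ L))).filter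
      (fun p => p.2 ≤ p.1) with hR
  have hmem : ∀ p : ℕ × ℕ, p ∈ R → p.1 < N ∧ p.2 < N ∧ L - 1 ≤ p.1 + p.2 ∧ p.2 ≤ p.1 := by
    intro p hp
    simp only [hR, Finset.mem_filter, Finset.mem_product, Finset.mem_range] at hp
    omega
  -- termwise bound
  have hterm : ∀ p ∈ R, |D p.1 p.2|
      ≤ 2 * C₀ * y ^ (L - 1) * (y ^ (p.1 - p.2) * y ^ (p.1 + p.2 - (L - 1))) := by
    intro p hp
    obtain ⟨_, _, hsum, hle⟩ := hmem p hp
    have h1 : |D p.1 p.2| ≤ 2 * C₀ * (y ^ 2) ^ p.1 := hD p.1 p.2 hle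
    have hexp : (y ^ 2) ^ p.1 = y ^ (L - 1) * (y ^ (p.1 - p.2) * y ^ (p.1 + p.2 - (L - 1))) := by
      rw [← pow_mul, ← pow_add, ← pow_add]
      congr 1
      omega
    rw [hexp] at h1
    calc |D p.1 p.2| ≤ 2 * C₀ * (y ^ (L - 1) * (y ^ (p.1 - p.2) * y ^ (p.1 + p.2 - (L - 1)))) := h1
      _ = 2 * C₀ * y ^ (L - 1) * (y ^ (p.1 - p.2) * y ^ (p.1 + p.2 - (L - 1))) := by ring
  calc ∑ p ∈ R, |D p.1 p.2|
      ≤ ∑ p ∈ R, 2 * C₀ * y ^ (L - 1) * (y ^ (p.1 - p.2) * y ^ (p.1 + p.2 - (L - 1))) :=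
        Finset.sum_le_sum hterm
    _ = 2 * C₀ * y ^ (L - 1) * ∑ p ∈ R, (y ^ (p.1 - p.2) * y ^ (p.1 + p.2 - (L - 1))) := by
        rw [Finset.mul_sum]
    _ ≤ 2 * C₀ * y ^ (L - 1) * ((1 / (1 - y)) ^ 2) := by
        have hconst : 0 ≤ 2 * C₀ * y ^ (L - 1) := by positivity
        refine mul_le_mul_of_nonneg_left ?_ hconst
        -- reindex via the injection p ↦ (p.1 - p.2, p.1 + p.2 - (L-1))
        have hinj : ∀ p ∈ R, ∀ q ∈ R,
            (fun p : ℕ × ℕ => (p.1 - p.2, p.1 + p.2 - (L - 1))) p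
              = (fun p : ℕ × ℕ => (p.1 - p.2, p.1 + p.2 - (L - 1))) q → p = q := by
          intro p hp q hq h
          obtain ⟨_, _, hp3, hp4⟩ := hmem p hp
          obtain ⟨_, _, hq3, hq4⟩ := hmem q hq
          simp only [Prod.mk.injEq] at h
          obtain ⟨h1, h2⟩ := h
          have : p.1 = q.1 ∧ p.2 = q.2 := by omega
          exact Prod.ext this.1 this.2
        have himg := (Finset.sum_image (f := fun q : ℕ × ℕ => y ^ q.1 * y ^ q.2)
          (g := fun p : ℕ × ℕ => (p.1 - p.2, p.1 + p.2 - (L - 1))) hinj).symm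
        calc ∑ p ∈ R, (y ^ (p.1 - p.2) * y ^ (p.1 + p.2 - (L - 1)))
            = ∑ q ∈ R.image (fun p : ℕ × ℕ => (p.1 - p.2, p.1 + p.2 - (L - 1))),
                y ^ q.1 * y ^ q.2 := by rw [← himg]
          _ ≤ ∑ q ∈ range (2 * N + 2) ×ˢ range (2 * N + 2), y ^ q.1 * y ^ q.2 := by
              apply Finset.sum_le_sum_of_subset_of_nonneg
              · intro q hq
                simp only [Finset.mem_image] at hq
                obtain ⟨p, hp, hpq⟩ := hq
                obtain ⟨h1, h2, _, _⟩ := hmem p hp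
                simp only [Finset.mem_product, Finset.mem_range]
                subst hpq
                constructor <;> omega
              · intros; positivity
          _ = (∑ u ∈ range (2 * N + 2), y ^ u) * (∑ v ∈ range (2 * N + 2), y ^ v) := by
              rw [Finset.sum_product, Finset.sum_mul_sum]
          _ ≤ (1 / (1 - y)) * (1 / (1 - y)) := by
              have hg := geom_le y hy0.le hy1 (2 * N + 2)
              have hnn : 0 ≤ ∑ u ∈ range (2 * N + 2), y ^ u :=
                Finset.sum_nonneg fun i _ => pow_nonneg hy0.le i
              have hpos : (0:ℝ) ≤ 1 / (1 - y) := by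
                have h1 : (0:ℝ) < 1 - y := by linarith
                positivity
              exact mul_le_mul hg hg hnn hpos
          _ = (1 / (1 - y)) ^ 2 := by ring
    _ = 2 * C₀ * (1 / (1 - y)) ^ 2 * y ^ (L - 1) := by ring

lemma tail_bound (y : ℝ) (hy0 : 0 < y) (hy1 : y < 1) (C₀ : ℝ) (hC₀ : 0 ≤ C₀)
    (D : ℕ → ℕ → ℝ)
    (hD1 : ∀ a c, |D a c| ≤ 2 * C₀ * (y ^ 2) ^ a)
    (hD2 : ∀ a c, |D a c| ≤ 2 * C₀ * (y ^ 2) ^ c)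
    (L N : ℕ) (hL : 2 ≤ L) :
    ∑ p ∈ (range N ×ˢ range N).filter (fun p => ¬(p.1 + p.2 + 2 ≤ L)), |D p.1 p.2|
      ≤ 4 * C₀ * (1 / (1 - y)) ^ 2 * y ^ (L - 1) := by
  set R := (range N ×ˢ range N).filter (fun p => ¬(p.1 + p.2 + 2 ≤ L)) with hR
  have hsplit := Finset.sum_filter_add_sum_filter_not R (fun p : ℕ × ℕ => p.2 ≤ p.1)
    (fun p => |D p.1 p.2|)
  have h1 : ∑ p ∈ R.filter (fun p => p.2 ≤ p.1), |D p.1 p.2|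
      ≤ 2 * C₀ * (1 / (1 - y)) ^ 2 * y ^ (L - 1) :=
    half_bound y hy0 hy1 C₀ hC₀ D (fun a c _ => hD1 a c) L N hL
  -- the other half, by swapping coordinates
  have h2 : ∑ p ∈ R.filter (fun p => ¬(p.2 ≤ p.1)), |D p.1 p.2|
      ≤ 2 * C₀ * (1 / (1 - y)) ^ 2 * y ^ (L - 1) := by
    have hswap := half_bound y hy0 hy1 C₀ hC₀ (fun a c => D c a)
      (fun a c _ => hD2 c a) L N hL
    -- relate the two sums via the swap injection
    have hinj : ∀ p ∈ R.filter (fun p => ¬(p.2 ≤ p.1)),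
        ∀ q ∈ R.filter (fun p => ¬(p.2 ≤ p.1)), Prod.swap p = Prod.swap q → p = q :=
      fun p _ q _ h => Prod.swap_injective h
    have himg := Finset.sum_image (f := fun q : ℕ × ℕ => |D q.2 q.1|)
      (g := Prod.swap) hinj
    have hbij : ∑ p ∈ R.filter (fun p => ¬(p.2 ≤ p.1)), |D p.1 p.2|
        ≤ ∑ p ∈ ((range N ×ˢ range N).filter
            (fun p => ¬(p.1 + p.2 + 2 ≤ L))).filter (fun p => p.2 ≤ p.1),
          |D p.2 p.1| := by
      have heq : ∑ p ∈ R.filter (fun p => ¬(p.2 ≤ p.1)), |D p.1 p.2|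
          = ∑ q ∈ (R.filter (fun p => ¬(p.2 ≤ p.1))).image Prod.swap, |D q.2 q.1| := by
        rw [himg]
        rfl
      rw [heq]
      apply Finset.sum_le_sum_of_subset_of_nonneg
      · intro q hq
        simp only [Finset.mem_image, hR, Finset.mem_filter, Finset.mem_product,
          Finset.mem_range] at hq ⊢
        obtain ⟨p, hp, hpq⟩ := hq
        subst hpq
        simp only [Prod.swap, Prod.fst, Prod.snd]
        omega
      · intros; positivity
    exact hbij.trans hswap
  linarith

end QmcSparseAux

/-- Abstract form of the QMC sparse grid error bound (first part of Theorem 6.2):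
if the differences of the double sequence `Q` decay geometrically and `Q(j,k) → I`,
then the level-`L` sparse grid combination approximates `I` with error
`O(b^{-Lϑ/2})`. -/
theorem qmc_sparse_grid_error_abstract
    (b ϑ : ℝ) (hb : 1 < b) (hϑ : 0 < ϑ) (C₀ : ℝ) (hC₀ : 0 ≤ C₀)
    (Q : ℕ → ℕ → ℝ)
    (hQ0 : ∀ j, Q j 0 = 0) (h0Q : ∀ k, Q 0 k = 0)
    (hdiff₂ : ∀ j k : ℕ, 1 ≤ j → 1 ≤ k →
      |Q j k - Q j (k - 1)| ≤ C₀ * b ^ (-((k : ℝ) - 1) * ϑ))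
    (hdiff₁ : ∀ j k : ℕ, 1 ≤ j → 1 ≤ k →
      |Q j k - Q (j - 1) k| ≤ C₀ * b ^ (-((j : ℝ) - 1) * ϑ))
    (I : ℝ)
    (hconv : ∀ ε : ℝ, 0 < ε → ∃ M : ℕ, ∀ j k : ℕ, M ≤ j → M ≤ k → |Q j k - I| ≤ ε) :
    ∃ C : ℝ, ∀ L : ℕ, 2 ≤ L →
      |I - ∑ k ∈ Finset.Icc 1 (L - 1), (Q (L - k) k - Q (L - k) (k - 1))| ≤
        C * b ^ (-(L : ℝ) * ϑ / 2) := by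
  classical
  have hb0 : (0:ℝ) < b := by linarith
  set y : ℝ := b ^ (-(ϑ / 2)) with hy
  have hy0 : 0 < y := Real.rpow_pos_of_pos hb0 _
  have hy1 : y < 1 := Real.rpow_lt_one_of_one_lt_of_neg hb (by linarith)
  have hy2 : y ^ 2 = b ^ (-ϑ) := by
    rw [hy, ← Real.rpow_natCast (b ^ (-(ϑ/2))) 2, ← Real.rpow_mul hb0.le]
    congr 1
    push_cast
    ring
  have hxy : ∀ n : ℕ, (y ^ 2) ^ n = b ^ (-(n : ℝ) * ϑ) := by
    intro n
    rw [hy2, ← Real.rpow_natCast (b ^ (-ϑ)) n, ← Real.rpow_mul hb0.le]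
    congr 1
    push_cast
    ring
  -- bounds on the mixed differences
  set D : ℕ → ℕ → ℝ := QmcSparseAux.Dd Q with hD
  have hD2 : ∀ a c : ℕ, |D a c| ≤ 2 * C₀ * (y ^ 2) ^ c := by
    intro a c
    have e1 : |Q (a+1) (c+1) - Q (a+1) c| ≤ C₀ * b ^ (-(c : ℝ) * ϑ) := by
      have := hdiff₂ (a+1) (c+1) (by omega) (by omega)
      simpa using this
    have e2 : |Q a (c+1) - Q a c| ≤ C₀ * b ^ (-(c : ℝ) * ϑ) := by
      rcases Nat.eq_zero_or_pos a with rfl | ha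
      · simp only [h0Q, sub_self, abs_zero]
        positivity
      · have := hdiff₂ a (c+1) ha (by omega)
        simpa using this
    have : |D a c| ≤ |Q (a+1) (c+1) - Q (a+1) c| + |Q a (c+1) - Q a c| := by
      have : D a c = (Q (a+1) (c+1) - Q (a+1) c) - (Q a (c+1) - Q a c) := by
        simp only [hD, QmcSparseAux.Dd]; ring
      rw [this]
      exact abs_sub _ _
    rw [hxy c]
    linarith
  have hD1 : ∀ a c : ℕ, |D a c| ≤ 2 * C₀ * (y ^ 2) ^ a := by
    intro a c
    have e1 : |Q (a+1) (c+1) - Q a (c+1)| ≤ C₀ * b ^ (-(a : ℝ) * ϑ) := by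
      have := hdiff₁ (a+1) (c+1) (by omega) (by omega)
      simpa using this
    have e2 : |Q (a+1) c - Q a c| ≤ C₀ * b ^ (-(a : ℝ) * ϑ) := by
      rcases Nat.eq_zero_or_pos c with rfl | hc
      · simp only [hQ0, sub_self, abs_zero]
        positivity
      · have := hdiff₁ (a+1) c (by omega) hc
        simpa using this
    have : |D a c| ≤ |Q (a+1) (c+1) - Q a (c+1)| + |Q (a+1) c - Q a c| := by
      have : D a c = (Q (a+1) (c+1) - Q a (c+1)) - (Q (a+1) c - Q a c) := by
        simp only [hD, QmcSparseAux.Dd]; ring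
      rw [this]
      exact abs_sub _ _
    rw [hxy a]
    linarith
  -- the key finite estimate
  set K : ℝ := 4 * C₀ * (1 / (1 - y)) ^ 2 with hK
  have key : ∀ L : ℕ, 2 ≤ L → ∀ N : ℕ, L ≤ N →
      |Q N N - ∑ k ∈ Finset.Icc 1 (L - 1), (Q (L - k) k - Q (L - k) (k - 1))|
        ≤ K * y ^ (L - 1) := by
    intro L hL N hN
    have hcomb := QmcSparseAux.comb_eq Q hQ0 h0Q L N hL hN
    have htot : ∑ p ∈ Finset.range N ×ˢ Finset.range N, D p.1 p.2 = Q N N := by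
      rw [Finset.sum_product']
      exact QmcSparseAux.sumD Q hQ0 h0Q N N
    have hsplit := Finset.sum_filter_add_sum_filter_not
      (Finset.range N ×ˢ Finset.range N) (fun p : ℕ × ℕ => p.1 + p.2 + 2 ≤ L)
      (fun p => D p.1 p.2)
    have hdiffQ : Q N N - ∑ k ∈ Finset.Icc 1 (L - 1), (Q (L - k) k - Q (L - k) (k - 1))
        = ∑ p ∈ (Finset.range N ×ˢ Finset.range N).filter
            (fun p => ¬(p.1 + p.2 + 2 ≤ L)), D p.1 p.2 := by
      rw [hcomb, ← htot, ← hsplit]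
      ring
    rw [hdiffQ]
    calc |∑ p ∈ (Finset.range N ×ˢ Finset.range N).filter
            (fun p => ¬(p.1 + p.2 + 2 ≤ L)), D p.1 p.2|
        ≤ ∑ p ∈ (Finset.range N ×ˢ Finset.range N).filter
            (fun p => ¬(p.1 + p.2 + 2 ≤ L)), |D p.1 p.2| :=
          Finset.abs_sum_le_sum_abs _ _
      _ ≤ K * y ^ (L - 1) :=
          QmcSparseAux.tail_bound y hy0 hy1 C₀ hC₀ D hD1 hD2 L N hL
  -- pass to the limit
  refine ⟨K / y, fun L hL => ?_⟩
  have hfin : |I - ∑ k ∈ Finset.Icc 1 (L - 1), (Q (L - k) k - Q (L - k) (k - 1))|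
      ≤ K * y ^ (L - 1) := by
    apply le_of_forall_pos_le_add
    intro ε hε
    obtain ⟨M, hM⟩ := hconv ε hε
    set N := max M L with hN
    have hMN : M ≤ N := le_max_left _ _
    have hLN : L ≤ N := le_max_right _ _
    have h1 := hM N N hMN hMN
    have h2 := key L hL N hLN
    calc |I - ∑ k ∈ Finset.Icc 1 (L - 1), (Q (L - k) k - Q (L - k) (k - 1))|
        ≤ |I - Q N N| +
          |Q N N - ∑ k ∈ Finset.Icc 1 (L - 1), (Q (L - k) k - Q (L - k) (k - 1))| := by
          have := abs_sub_le I (Q N N)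
            (∑ k ∈ Finset.Icc 1 (L - 1), (Q (L - k) k - Q (L - k) (k - 1)))
          exact this
      _ ≤ ε + K * y ^ (L - 1) := by
          rw [abs_sub_comm] at h1
          linarith
      _ = K * y ^ (L - 1) + ε := by ring
  have hpowL : y ^ L = b ^ (-(L : ℝ) * ϑ / 2) := by
    rw [hy, ← Real.rpow_natCast (b ^ (-(ϑ/2))) L, ← Real.rpow_mul hb0.le]
    congr 1
    ring
  have hfact : K * y ^ (L - 1) = (K / y) * y ^ L := by
    have hyne : y ≠ 0 := ne_of_gt hy0
    have : y ^ L = y ^ (L - 1) * y := by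
      rw [← pow_succ]
      congr 1
      omega
    rw [this]
    field_simp
  rw [← hpowL, ← hfact]
  exact hfin
end

section
/- Let b ≥ 2 be an integer, let p, q, ϑ > 0 be reals with pϑ ≥ 1 and qϑ ≥ 1, and let C₀ ≥ 0. Let Q : ℕ × ℕ → ℝ satisfy Q(j,0) = 0 and Q(0,k) = 0 for all j, k ≥ 0, and suppose that for all j, k ≥ 1: |Q(j,k) − Q(j,k−1)| ≤ C₀ b^{−(k−1)ϑ} and |Q(j,k) − Q(j−1,k)| ≤ C₀ b^{−(j−1)ϑ}, and that there exists I ∈ ℝ with Q(j,k) → I as j, k → ∞. For an integer L ≥ 2 define the sparse grid approximation I_L := ∑_{k=1}^{L−1}(Q(L−k,k) − Q(L−k,k−1)) and the cost M := ∑_{k=1}^{L−1} b^{⌈(L−k)pϑ⌉} b^{⌈kqϑ⌉}. Then there exists a constant C depending only on b, p, q, ϑ and C₀ such that for every L ≥ 2, |I − I_L| ≤ C (log M)^{δ/(2p)} M^{−min(1/p,1/q)/2}, where δ = 1 if p = q and δ = 0 otherwise. -/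
set_option maxHeartbeats 1000000

open scoped BigOperators

open Finset in
/-- Sums of `x^(g k)` over a set where `g` is injective and `≥ m` are bounded
by the geometric tail. -/
lemma qmcAux_sum_pow_le {x : ℝ} (h0 : 0 ≤ x) (h1 : x < 1) (s : Finset ℕ)
    (g : ℕ → ℕ) (m : ℕ) (hg : Set.InjOn g s) (hm : ∀ k ∈ s, m ≤ g k) :
    ∑ k ∈ s, x ^ (g k) ≤ x ^ m * (1 - x)⁻¹ := by
  have hsummable : Summable (fun i : ℕ => x ^ i) := summable_geometric_of_lt_one h0 h1
  have h2 : ∀ k ∈ s, x ^ (g k) = x ^ m * x ^ (g k - m) := by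
    intro k hk
    rw [← pow_add, Nat.add_sub_cancel' (hm k hk)]
  rw [Finset.sum_congr rfl h2, ← Finset.mul_sum]
  have hinj : Set.InjOn (fun k => g k - m) s := by
    intro a ha b hb hab
    exact hg ha hb (by have := hm a ha; have := hm b hb; simp only at hab; omega)
  have : ∑ k ∈ s, x ^ (g k - m) = ∑ i ∈ s.image (fun k => g k - m), x ^ i := by
    rw [Finset.sum_image (fun a ha b hb h => hinj ha hb h)]
  rw [this]
  have hle : ∑ i ∈ s.image (fun k => g k - m), x ^ i ≤ ∑' i : ℕ, x ^ i :=
    Summable.sum_le_tsum _ (fun i _ => pow_nonneg h0 i) hsummable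
  rw [tsum_geometric_of_lt_one h0 h1] at hle
  exact mul_le_mul_of_nonneg_left hle (pow_nonneg h0 m)

/-- telescoping sum over `Icc 1 n`. -/
lemma qmcAux_telescope (f : ℕ → ℝ) (n : ℕ) :
    ∑ k ∈ Finset.Icc 1 n, (f k - f (k - 1)) = f n - f 0 := by
  induction n with
  | zero => simp
  | succ n ih =>
      rw [Finset.sum_Icc_succ_top (by omega : 1 ≤ n + 1), ih]
      simp

/-- endgame for the case `p ≠ q` (with `r` the larger of the two). -/
lemma qmcAux_case_ne {β y z E Cc r ϑ Mv : ℝ} (hβ0 : 0 < β) (hβ1 : 1 ≤ β)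
    (hy0 : 0 < y) (hz1 : z < 1) (hE : 0 ≤ E) (hr : 0 < r)
    (hMv : 0 < Mv) (L : ℕ) (hL : 2 ≤ L)
    (hy : y = β ^ (-(ϑ/2)))
    (hub : Mv ≤ β ^ ((L:ℝ)*r*ϑ + 2) * (1-z)⁻¹)
    (hC : E * y⁻¹ * β^(1/r) * ((1-z)⁻¹)^(1/(2*r)) ≤ Cc) :
    E * y ^ (L-1) ≤ Cc * Mv ^ (-(1/(2*r))) := by
  set e : ℝ := 1/(2*r) with he_def
  have he : 0 < e := by positivity
  set w : ℝ := (1-z)⁻¹ with hw_def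
  have hw0 : 0 < w := inv_pos.2 (by linarith)
  set s : ℝ := (L:ℝ)*r*ϑ + 2 with hs_def
  have hCc0 : 0 ≤ Cc := le_trans (by positivity) hC
  have step1 : (β^s * w) ^ (-e) ≤ Mv ^ (-e) :=
    Real.rpow_le_rpow_of_nonpos hMv hub (neg_nonpos.2 he.le)
  have step2 : (β^s * w) ^ (-e) = (β^s)^(-e) * w^(-e) :=
    Real.mul_rpow (Real.rpow_nonneg hβ0.le _) hw0.le
  have step3 : (β^s)^(-e) = β ^ (s * (-e)) := by
    rw [← Real.rpow_mul hβ0.le]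
  have step4 : s * (-e) = (-(ϑ/2))*(L:ℝ) + (-(1/r)) := by
    rw [hs_def, he_def]; field_simp; ring
  have step5 : β ^ ((-(ϑ/2))*(L:ℝ) + (-(1/r))) = β^((-(ϑ/2))*(L:ℝ)) * β^(-(1/r)) :=
    Real.rpow_add hβ0 _ _
  have step6 : β^((-(ϑ/2))*(L:ℝ)) = y ^ L := by
    rw [hy, ← Real.rpow_natCast (β ^ (-(ϑ/2))) L, ← Real.rpow_mul hβ0.le]
  have hyL : y ^ L = y ^ (L-1) * y := by
    rw [← pow_succ]; congr 1; omega
  have hcancel1 : β^(1/r) * β^(-(1/r)) = 1 := by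
    rw [← Real.rpow_add hβ0]; norm_num
  have hcancel2 : w^e * w^(-e) = 1 := by
    rw [← Real.rpow_add hw0]; norm_num
  have hprod : (E * y⁻¹ * β^(1/r) * w^e) * (y^L * β^(-(1/r)) * w^(-e))
      = E * y ^ (L-1) := by
    rw [hyL]
    have : (E * y⁻¹ * β^(1/r) * w^e) * ((y^(L-1) * y) * β^(-(1/r)) * w^(-e))
        = E * y ^ (L-1) * ((y⁻¹*y) * ((β^(1/r) * β^(-(1/r))) * (w^e * w^(-e)))) := by
      ring
    rw [this, hcancel1, hcancel2]
    simp [inv_mul_cancel₀ hy0.ne']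

  calc E * y ^ (L-1) = (E * y⁻¹ * β^(1/r) * w^e) * (y^L * β^(-(1/r)) * w^(-e)) :=
        hprod.symm
    _ ≤ Cc * (y^L * β^(-(1/r)) * w^(-e)) := by
        apply mul_le_mul_of_nonneg_right hC
        positivity
    _ = Cc * ((β^s * w) ^ (-e)) := by
        rw [step2, step3, step4, step5, step6]
    _ ≤ Cc * Mv ^ (-e) := mul_le_mul_of_nonneg_left step1 hCc0

/-- endgame for the case `p = q = r`. -/
lemma qmcAux_case_eq {β y E Cc r ϑ Mv : ℝ} (hβ0 : 0 < β)
    (hy0 : 0 < y) (hE : 0 ≤ E) (hr : 0 < r)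
    (hMv : 0 < Mv) (L : ℕ) (hL : 2 ≤ L)
    (hy : y = β ^ (-(ϑ/2)))
    (hub : Mv ≤ ((L:ℝ)-1) * β ^ ((L:ℝ)*r*ϑ + 2))
    (hlog : ((L:ℝ)-1) * Real.log 2 ≤ Real.log Mv)
    (hC : E * y⁻¹ * β^(1/r) * (Real.log 2)^(-(1/(2*r))) ≤ Cc) :
    E * y ^ (L-1) ≤ Cc * (Real.log Mv) ^ (1/(2*r)) * Mv ^ (-(1/(2*r))) := by
  set e : ℝ := 1/(2*r) with he_def
  have he : 0 < e := by positivity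
  have hlg : (0:ℝ) < Real.log 2 := Real.log_pos (by norm_num)
  have hL1 : (0:ℝ) < (L:ℝ) - 1 := by
    have : (2:ℝ) ≤ (L:ℝ) := by exact_mod_cast hL
    linarith
  set s : ℝ := (L:ℝ)*r*ϑ + 2 with hs_def
  have hlogpos : 0 < Real.log Mv := lt_of_lt_of_le (by positivity) hlog
  have hCc0 : 0 ≤ Cc := le_trans (by positivity) hC
  have hBpos : 0 < ((L:ℝ)-1) * β ^ s := by positivity
  have step1 : (((L:ℝ)-1) * Real.log 2) ^ e / (((L:ℝ)-1) * β ^ s) ^ e ≤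
      (Real.log Mv) ^ e / Mv ^ e := by
    apply div_le_div₀ (Real.rpow_nonneg hlogpos.le e)
      (Real.rpow_le_rpow (by positivity) hlog he.le)
      (Real.rpow_pos_of_pos hMv e)
      (Real.rpow_le_rpow hMv.le hub he.le)
  have step2 : (((L:ℝ)-1) * Real.log 2) ^ e / (((L:ℝ)-1) * β ^ s) ^ e
      = (Real.log 2 * β ^ (-s)) ^ e := by
    rw [← Real.div_rpow (by positivity) hBpos.le]
    congr 1
    rw [mul_div_mul_left _ _ hL1.ne', Real.rpow_neg hβ0.le, div_eq_mul_inv]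
  have step3 : (Real.log 2 * β ^ (-s)) ^ e
      = (Real.log 2) ^ e * (y ^ L * β ^ (-(1/r))) := by
    rw [Real.mul_rpow hlg.le (Real.rpow_nonneg hβ0.le _), ← Real.rpow_mul hβ0.le]
    congr 1
    have h4 : (-s) * e = (-(ϑ/2))*(L:ℝ) + (-(1/r)) := by
      rw [hs_def, he_def]; field_simp; ring
    rw [h4, Real.rpow_add hβ0]
    congr 1
    rw [hy, ← Real.rpow_natCast (β ^ (-(ϑ/2))) L, ← Real.rpow_mul hβ0.le]
  have hyL : y ^ L = y ^ (L-1) * y := by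
    rw [← pow_succ]; congr 1; omega
  have hcancel1 : β^(1/r) * β^(-(1/r)) = 1 := by
    rw [← Real.rpow_add hβ0]; norm_num
  have hcancel2 : (Real.log 2)^(-e) * (Real.log 2)^e = 1 := by
    rw [← Real.rpow_add hlg]; norm_num
  have hprod : (E * y⁻¹ * β^(1/r) * (Real.log 2)^(-e)) *
      ((Real.log 2) ^ e * (y ^ L * β ^ (-(1/r)))) = E * y ^ (L-1) := by
    rw [hyL]
    have : (E * y⁻¹ * β^(1/r) * (Real.log 2)^(-e)) *
        ((Real.log 2) ^ e * ((y ^ (L-1) * y) * β ^ (-(1/r))))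
        = E * y ^ (L-1) * ((y⁻¹*y) * ((β^(1/r) * β^(-(1/r))) *
            ((Real.log 2)^(-e) * (Real.log 2)^e))) := by ring
    rw [this, hcancel1, hcancel2]
    simp [inv_mul_cancel₀ hy0.ne']
  have hG : Mv ^ (-e) = (Mv ^ e)⁻¹ := Real.rpow_neg hMv.le e
  calc E * y ^ (L-1)
      = (E * y⁻¹ * β^(1/r) * (Real.log 2)^(-e)) *
        ((Real.log 2) ^ e * (y ^ L * β ^ (-(1/r)))) := hprod.symm
    _ ≤ Cc * ((Real.log 2) ^ e * (y ^ L * β ^ (-(1/r)))) := by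
        apply mul_le_mul_of_nonneg_right hC
        positivity
    _ = Cc * ((Real.log 2 * β ^ (-s)) ^ e) := by rw [step3]
    _ = Cc * ((((L:ℝ)-1) * Real.log 2) ^ e / (((L:ℝ)-1) * β ^ s) ^ e) := by
        rw [step2]
    _ ≤ Cc * ((Real.log Mv) ^ e / Mv ^ e) := mul_le_mul_of_nonneg_left step1 hCc0
    _ = Cc * (Real.log Mv) ^ e * Mv ^ (-e) := by
        rw [hG]; ring

open scoped BigOperators
set_option maxHeartbeats 1000000


/-- Abstract form of the full QMC sparse grid convergence result (Theorem 6.2):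
under geometric decay of the differences of `Q` and convergence `Q(j,k) → I`,
the level-`L` sparse grid combination `I_L` satisfies
`|I - I_L| ≤ C (log M)^{δ/(2p)} M^{-min(1/p,1/q)/2}` in terms of the total
cost `M = ∑_{k=1}^{L-1} b^{⌈(L-k)pϑ⌉} b^{⌈kqϑ⌉}`, where `δ = 1` iff `p = q`. -/
theorem qmc_sparse_grid_full_convergence
    (b : ℕ) (hb : 2 ≤ b) (p q ϑ : ℝ) (hp : 0 < p) (hq : 0 < q) (hϑ : 0 < ϑ)
    (hpϑ : 1 ≤ p * ϑ) (hqϑ : 1 ≤ q * ϑ)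
    (C₀ : ℝ) (hC₀ : 0 ≤ C₀)
    (Q : ℕ → ℕ → ℝ) (hQ0 : ∀ j, Q j 0 = 0) (h0Q : ∀ k, Q 0 k = 0)
    (hdiff₂ : ∀ j k : ℕ, 1 ≤ j → 1 ≤ k →
      |Q j k - Q j (k - 1)| ≤ C₀ * (b : ℝ) ^ (-((k : ℝ) - 1) * ϑ))
    (hdiff₁ : ∀ j k : ℕ, 1 ≤ j → 1 ≤ k →
      |Q j k - Q (j - 1) k| ≤ C₀ * (b : ℝ) ^ (-((j : ℝ) - 1) * ϑ))
    (I : ℝ)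
    (hconv : ∀ ε : ℝ, 0 < ε → ∃ M : ℕ, ∀ j k : ℕ, M ≤ j → M ≤ k → |Q j k - I| ≤ ε) :
    ∃ C : ℝ, ∀ L : ℕ, 2 ≤ L →
      |I - ∑ k ∈ Finset.Icc 1 (L - 1), (Q (L - k) k - Q (L - k) (k - 1))| ≤
        C * (Real.log (∑ k ∈ Finset.Icc 1 (L - 1),
                (b : ℝ) ^ ⌈((L : ℝ) - (k : ℝ)) * p * ϑ⌉ *
                  (b : ℝ) ^ ⌈(k : ℝ) * q * ϑ⌉)) ^
              ((if p = q then (1 : ℝ) else 0) / (2 * p)) *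
          (∑ k ∈ Finset.Icc 1 (L - 1),
              (b : ℝ) ^ ⌈((L : ℝ) - (k : ℝ)) * p * ϑ⌉ *
                (b : ℝ) ^ ⌈(k : ℝ) * q * ϑ⌉) ^
            (-min (1 / p) (1 / q) / 2) := by
  set β : ℝ := (b : ℝ) with hβdef
  have hβ2 : (2:ℝ) ≤ β := by rw [hβdef]; exact_mod_cast hb
  have hβ0 : (0:ℝ) < β := by linarith
  have hβ1 : (1:ℝ) ≤ β := by linarith
  have hβgt1 : (1:ℝ) < β := by linarith
  set x : ℝ := β ^ (-ϑ) with hxdef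
  set y : ℝ := β ^ (-(ϑ/2)) with hydef
  have hx0 : 0 < x := Real.rpow_pos_of_pos hβ0 _
  have hx1 : x < 1 := Real.rpow_lt_one_of_one_lt_of_neg hβgt1 (by linarith)
  have hy0 : 0 < y := Real.rpow_pos_of_pos hβ0 _
  have hy1 : y < 1 := Real.rpow_lt_one_of_one_lt_of_neg hβgt1 (by linarith)
  have hxy : x ≤ y := Real.rpow_le_rpow_of_exponent_le hβ1 (by linarith)
  have hyy : y * y = x := by
    rw [hydef, hxdef, ← Real.rpow_add hβ0]; ring_nf
  have h1x : 0 < 1 - x := by linarith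
  have h1xinv : (1:ℝ) ≤ (1-x)⁻¹ := by
    rw [le_inv_comm₀ one_pos h1x]
    linarith
  -- convert difference hypotheses to powers of x
  have hxpow : ∀ n : ℕ, x ^ n = β ^ (-(n:ℝ) * ϑ) := by
    intro n
    rw [hxdef, ← Real.rpow_natCast (β ^ (-ϑ)) n, ← Real.rpow_mul hβ0.le]
    ring_nf
  have hd₂ : ∀ j k : ℕ, 1 ≤ j → 1 ≤ k → |Q j k - Q j (k-1)| ≤ C₀ * x ^ (k-1) := by
    intro j k hj hk
    have h := hdiff₂ j k hj hk
    have e : -((k:ℝ)-1)*ϑ = -(((k-1:ℕ)):ℝ)*ϑ := by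
      rw [Nat.cast_sub hk]; push_cast; ring
    rwa [e, ← hxpow] at h
  have hd₁ : ∀ j k : ℕ, 1 ≤ j → 1 ≤ k → |Q j k - Q (j-1) k| ≤ C₀ * x ^ (j-1) := by
    intro j k hj hk
    have h := hdiff₁ j k hj hk
    have e : -((j:ℝ)-1)*ϑ = -(((j-1:ℕ)):ℝ)*ϑ := by
      rw [Nat.cast_sub hj]; push_cast; ring
    rwa [e, ← hxpow] at h
  -- telescoping in the first index
  have htelsum₁ : ∀ c, 1 ≤ c → ∀ m n : ℕ, m ≤ n →
      |Q n c - Q m c| ≤ C₀ * ∑ j ∈ Finset.Ico m n, x ^ j := by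
    intro c hc m n hmn
    induction n, hmn using Nat.le_induction with
    | base => simp
    | succ n hmn ih =>
        have h1 : |Q (n+1) c - Q n c| ≤ C₀ * x ^ n := by
          simpa using hd₁ (n+1) c (by omega) hc
        calc |Q (n+1) c - Q m c| ≤ |Q (n+1) c - Q n c| + |Q n c - Q m c| :=
              abs_sub_le _ _ _
          _ ≤ C₀ * x ^ n + C₀ * ∑ j ∈ Finset.Ico m n, x ^ j := add_le_add h1 ih
          _ = C₀ * ∑ j ∈ Finset.Ico m (n+1), x ^ j := by
              rw [Finset.sum_Ico_succ_top hmn]; ring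
  have htelsum₂ : ∀ r, 1 ≤ r → ∀ m n : ℕ, m ≤ n →
      |Q r n - Q r m| ≤ C₀ * ∑ j ∈ Finset.Ico m n, x ^ j := by
    intro r hr m n hmn
    induction n, hmn using Nat.le_induction with
    | base => simp
    | succ n hmn ih =>
        have h1 : |Q r (n+1) - Q r n| ≤ C₀ * x ^ n := by
          simpa using hd₂ r (n+1) hr (by omega)
        calc |Q r (n+1) - Q r m| ≤ |Q r (n+1) - Q r n| + |Q r n - Q r m| :=
              abs_sub_le _ _ _
          _ ≤ C₀ * x ^ n + C₀ * ∑ j ∈ Finset.Ico m n, x ^ j := add_le_add h1 ih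
          _ = C₀ * ∑ j ∈ Finset.Ico m (n+1), x ^ j := by
              rw [Finset.sum_Ico_succ_top hmn]; ring
  have hIcoSum : ∀ m n : ℕ, ∑ j ∈ Finset.Ico m n, x ^ j ≤ x ^ m * (1-x)⁻¹ := by
    intro m n
    exact qmcAux_sum_pow_le hx0.le hx1 (Finset.Ico m n) id m Function.injective_id.injOn
      (fun k hk => (Finset.mem_Ico.mp hk).1)
  have htel₁ : ∀ c m n : ℕ, 1 ≤ m → m ≤ n →
      |Q n c - Q m c| ≤ C₀ * (x ^ m * (1-x)⁻¹) := by
    intro c m n _ hmn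
    rcases Nat.eq_zero_or_pos c with hc | hc
    · subst hc
      rw [hQ0, hQ0, sub_self, abs_zero]
      positivity
    · exact (htelsum₁ c hc m n hmn).trans
        (mul_le_mul_of_nonneg_left (hIcoSum m n) hC₀)
  have htel₂ : ∀ r m n : ℕ, 1 ≤ r → m ≤ n →
      |Q r n - Q r m| ≤ C₀ * (x ^ m * (1-x)⁻¹) := by
    intro r m n hr hmn
    exact (htelsum₂ r hr m n hmn).trans
      (mul_le_mul_of_nonneg_left (hIcoSum m n) hC₀)
  -- the main error estimate
  set E : ℝ := C₀ * (1-x)⁻¹ + 4 * C₀ * (1-x)⁻¹ * (1-x)⁻¹ with hEdef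
  have hE0 : 0 ≤ E := by positivity
  have key : ∀ L : ℕ, 2 ≤ L →
      |I - ∑ k ∈ Finset.Icc 1 (L - 1), (Q (L - k) k - Q (L - k) (k - 1))| ≤
        E * y ^ (L-1) := by
    intro L hL
    set s : Finset ℕ := Finset.Icc 1 (L-1) with hsdef
    set IL : ℝ := ∑ k ∈ s, (Q (L-k) k - Q (L-k) (k-1)) with hILdef
    refine le_of_forall_pos_le_add (fun ε hε => ?_)
    obtain ⟨N₀, hN₀⟩ := hconv ε hε
    set N : ℕ := max N₀ L with hNdef
    have hNL : L ≤ N := le_max_right _ _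
    have hA : |I - Q N N| ≤ ε := by
      rw [abs_sub_comm]; exact hN₀ N N (le_max_left _ _) (le_max_left _ _)
    have hB : |Q N N - Q N (L-1)| ≤ C₀ * (x^(L-1) * (1-x)⁻¹) :=
      htel₂ N (L-1) N (by omega) (by omega)
    have hid : Q N (L-1) - IL
        = ∑ k ∈ s, ((Q N k - Q N (k-1)) - (Q (L-k) k - Q (L-k) (k-1))) := by
      rw [Finset.sum_sub_distrib, hILdef, hsdef, qmcAux_telescope (Q N) (L-1), hQ0]
      ring
    have hterm : ∀ k ∈ s, |(Q N k - Q N (k-1)) - (Q (L-k) k - Q (L-k) (k-1))| ≤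
        2*C₀*(1-x)⁻¹ * x ^ (if 2*k ≤ L then L - k else k - 1) := by
      intro k hks
      have hk := Finset.mem_Icc.mp hks
      by_cases h2k : 2*k ≤ L
      · rw [if_pos h2k]
        have h1 : |Q N k - Q (L-k) k| ≤ C₀ * (x^(L-k) * (1-x)⁻¹) :=
          htel₁ k (L-k) N (by omega) (by omega)
        have h2 : |Q N (k-1) - Q (L-k) (k-1)| ≤ C₀ * (x^(L-k) * (1-x)⁻¹) :=
          htel₁ (k-1) (L-k) N (by omega) (by omega)
        have hre : (Q N k - Q N (k-1)) - (Q (L-k) k - Q (L-k) (k-1))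
            = (Q N k - Q (L-k) k) - (Q N (k-1) - Q (L-k) (k-1)) := by ring
        calc |(Q N k - Q N (k-1)) - (Q (L-k) k - Q (L-k) (k-1))|
            = |(Q N k - Q (L-k) k) - (Q N (k-1) - Q (L-k) (k-1))| := by rw [hre]
          _ ≤ |Q N k - Q (L-k) k| + |Q N (k-1) - Q (L-k) (k-1)| := abs_sub _ _
          _ ≤ C₀ * (x^(L-k) * (1-x)⁻¹) + C₀ * (x^(L-k) * (1-x)⁻¹) := add_le_add h1 h2
          _ = 2*C₀*(1-x)⁻¹ * x^(L-k) := by ring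
      · rw [if_neg h2k]
        have h1 : |Q N k - Q N (k-1)| ≤ C₀ * x^(k-1) := hd₂ N k (by omega) hk.1
        have h2 : |Q (L-k) k - Q (L-k) (k-1)| ≤ C₀ * x^(k-1) := hd₂ (L-k) k (by omega) hk.1
        calc |(Q N k - Q N (k-1)) - (Q (L-k) k - Q (L-k) (k-1))|
            ≤ |Q N k - Q N (k-1)| + |Q (L-k) k - Q (L-k) (k-1)| := abs_sub _ _
          _ ≤ C₀ * x^(k-1) + C₀ * x^(k-1) := add_le_add h1 h2
          _ = 2*C₀ * x^(k-1) := by ring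
          _ ≤ 2*C₀*(1-x)⁻¹ * x^(k-1) := by
              apply mul_le_mul_of_nonneg_right _ (pow_nonneg hx0.le _)
              nlinarith
    have hxym : ∀ m : ℕ, L - 1 ≤ 2*m → x ^ m ≤ y ^ (L-1) := by
      intro m hm
      have h1 : x ^ m = y ^ (m + m) := by
        rw [← hyy, pow_add, mul_pow]
      rw [h1]
      exact pow_le_pow_of_le_one hy0.le hy1.le (by omega)
    have hsum : ∑ k ∈ s, x ^ (if 2*k ≤ L then L - k else k - 1)
        ≤ 2 * (y^(L-1) * (1-x)⁻¹) := by
      rw [← Finset.sum_filter_add_sum_filter_not s (fun k => 2*k ≤ L)]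
      have hb1 : ∑ k ∈ s.filter (fun k => 2*k ≤ L), x ^ (if 2*k ≤ L then L - k else k - 1)
          ≤ x ^ (L - L/2) * (1-x)⁻¹ := by
        rw [Finset.sum_congr rfl (fun k hk => by
          rw [if_pos (Finset.mem_filter.mp hk).2])]
        apply qmcAux_sum_pow_le hx0.le hx1 _ (fun k => L - k) (L - L/2)
        · intro a ha b hb hab
          have ha' := Finset.mem_Icc.mp (Finset.mem_filter.mp ha).1
          have hb' := Finset.mem_Icc.mp (Finset.mem_filter.mp hb).1
          simp only at hab
          omega
        · intro k hk
          have h1 := Finset.mem_Icc.mp (Finset.mem_filter.mp hk).1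
          have h2 := (Finset.mem_filter.mp hk).2
          omega
      have hb2 : ∑ k ∈ s.filter (fun k => ¬ 2*k ≤ L), x ^ (if 2*k ≤ L then L - k else k - 1)
          ≤ x ^ (L/2) * (1-x)⁻¹ := by
        rw [Finset.sum_congr rfl (fun k hk => by
          rw [if_neg (Finset.mem_filter.mp hk).2])]
        apply qmcAux_sum_pow_le hx0.le hx1 _ (fun k => k - 1) (L/2)
        · intro a ha b hb hab
          have ha' := Finset.mem_Icc.mp (Finset.mem_filter.mp ha).1
          have hb' := Finset.mem_Icc.mp (Finset.mem_filter.mp hb).1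
          simp only at hab
          omega
        · intro k hk
          have h1 := Finset.mem_Icc.mp (Finset.mem_filter.mp hk).1
          have h2 := (Finset.mem_filter.mp hk).2
          omega
      have e1 : x ^ (L - L/2) ≤ y ^ (L-1) := hxym _ (by omega)
      have e2 : x ^ (L/2) ≤ y ^ (L-1) := hxym _ (by omega)
      have h1xinv0 : (0:ℝ) ≤ (1-x)⁻¹ := by positivity
      nlinarith [mul_le_mul_of_nonneg_right e1 h1xinv0, mul_le_mul_of_nonneg_right e2 h1xinv0]
    have hC : |Q N (L-1) - IL| ≤ 4*C₀*(1-x)⁻¹*(1-x)⁻¹ * y^(L-1) := by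
      rw [hid]
      calc |∑ k ∈ s, ((Q N k - Q N (k-1)) - (Q (L-k) k - Q (L-k) (k-1)))|
          ≤ ∑ k ∈ s, |(Q N k - Q N (k-1)) - (Q (L-k) k - Q (L-k) (k-1))| :=
            Finset.abs_sum_le_sum_abs _ _
        _ ≤ ∑ k ∈ s, 2*C₀*(1-x)⁻¹ * x ^ (if 2*k ≤ L then L - k else k - 1) :=
            Finset.sum_le_sum hterm
        _ = 2*C₀*(1-x)⁻¹ * ∑ k ∈ s, x ^ (if 2*k ≤ L then L - k else k - 1) := by
            rw [Finset.mul_sum]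
        _ ≤ 2*C₀*(1-x)⁻¹ * (2 * (y^(L-1) * (1-x)⁻¹)) := by
            apply mul_le_mul_of_nonneg_left hsum
            positivity
        _ = 4*C₀*(1-x)⁻¹*(1-x)⁻¹ * y^(L-1) := by ring
    have hxL : x^(L-1) ≤ y^(L-1) := pow_le_pow_left₀ hx0.le hxy _
    calc |I - IL| ≤ |I - Q N N| + |Q N N - IL| := abs_sub_le _ _ _
      _ ≤ |I - Q N N| + (|Q N N - Q N (L-1)| + |Q N (L-1) - IL|) := by
          have := abs_sub_le (Q N N) (Q N (L-1)) IL
          linarith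
      _ ≤ ε + (C₀ * (x^(L-1) * (1-x)⁻¹) + 4*C₀*(1-x)⁻¹*(1-x)⁻¹ * y^(L-1)) := by
          have := add_le_add hB hC
          linarith [hA]
      _ ≤ E * y ^ (L-1) + ε := by
          rw [hEdef]
          have h1 : C₀ * (x^(L-1) * (1-x)⁻¹) ≤ C₀ * (1-x)⁻¹ * y^(L-1) := by
            have := mul_le_mul_of_nonneg_right hxL (by positivity : (0:ℝ) ≤ (1-x)⁻¹)
            nlinarith
          nlinarith
  -- setup for the cost bounds
  set z : ℝ := β ^ (-(|q - p| * ϑ)) with hzdef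
  have hz0 : 0 < z := Real.rpow_pos_of_pos hβ0 _
  have hz1 : z ≤ 1 := Real.rpow_le_one_of_one_le_of_nonpos hβ1
    (neg_nonpos.2 (by positivity))
  have hw0 : (0:ℝ) ≤ (1-z)⁻¹ := inv_nonneg.2 (by linarith)
  have hzpow_one : ∀ n : ℤ, 0 ≤ n → (1:ℝ) ≤ β ^ n := by
    intro n hn
    have h := Real.rpow_le_rpow_of_exponent_le hβ1
      (show (0:ℝ) ≤ (n:ℝ) by exact_mod_cast hn)
    rw [Real.rpow_zero, Real.rpow_intCast] at h
    exact h
  have hceil_le : ∀ a : ℝ, β ^ (⌈a⌉ : ℤ) ≤ β ^ (a+1) := by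
    intro a
    rw [← Real.rpow_intCast β ⌈a⌉]
    exact Real.rpow_le_rpow_of_exponent_le hβ1 (by exact_mod_cast (Int.ceil_lt_add_one a).le)
  have hceil_ge : ∀ a : ℝ, β ^ a ≤ β ^ (⌈a⌉ : ℤ) := by
    intro a
    rw [← Real.rpow_intCast β ⌈a⌉]
    exact Real.rpow_le_rpow_of_exponent_le hβ1 (Int.le_ceil a)
  have hlog2 : (0:ℝ) < Real.log 2 := Real.log_pos (by norm_num)
  -- the global constant
  refine ⟨E * y⁻¹ * β^(1/p) * (Real.log 2)^(-(1/(2*p)))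
        + E * y⁻¹ * β^(1/q) * ((1-z)⁻¹)^(1/(2*q))
        + E * y⁻¹ * β^(1/p) * ((1-z)⁻¹)^(1/(2*p)), ?_⟩
  intro L hL
  set Mv : ℝ := ∑ k ∈ Finset.Icc 1 (L-1),
      β ^ (⌈((L:ℝ) - (k:ℝ))*p*ϑ⌉ : ℤ) * β ^ (⌈(k:ℝ)*q*ϑ⌉ : ℤ) with hMdef
  have hmem1 : (1:ℕ) ∈ Finset.Icc 1 (L-1) := Finset.mem_Icc.mpr ⟨le_rfl, by omega⟩
  have htpos : ∀ k ∈ Finset.Icc 1 (L-1),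
      (0:ℝ) < β ^ (⌈((L:ℝ) - (k:ℝ))*p*ϑ⌉ : ℤ) * β ^ (⌈(k:ℝ)*q*ϑ⌉ : ℤ) :=
    fun k _ => mul_pos (zpow_pos hβ0 _) (zpow_pos hβ0 _)
  have hMpos : 0 < Mv := Finset.sum_pos htpos ⟨1, hmem1⟩
  have hterm_nonneg : (0:ℝ) ≤ E * y⁻¹ := by positivity
  have hC2nn : (0:ℝ) ≤ E * y⁻¹ * β^(1/q) * ((1-z)⁻¹)^(1/(2*q)) := by
    apply mul_nonneg (by positivity)
    exact Real.rpow_nonneg hw0 _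
  have hC3nn : (0:ℝ) ≤ E * y⁻¹ * β^(1/p) * ((1-z)⁻¹)^(1/(2*p)) := by
    apply mul_nonneg (by positivity)
    exact Real.rpow_nonneg hw0 _
  have hC1nn : (0:ℝ) ≤ E * y⁻¹ * β^(1/p) * (Real.log 2)^(-(1/(2*p))) := by
    apply mul_nonneg (by positivity)
    exact Real.rpow_nonneg hlog2.le _
  have hkey := key L hL
  by_cases hpq : p = q
  · -- case p = q
    subst hpq
    have hub : ∀ k ∈ Finset.Icc 1 (L-1),
        β ^ (⌈((L:ℝ) - (k:ℝ))*p*ϑ⌉ : ℤ) * β ^ (⌈(k:ℝ)*p*ϑ⌉ : ℤ)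
          ≤ β ^ ((L:ℝ)*p*ϑ + 2) := by
      intro k _
      have h1 := hceil_le (((L:ℝ)-(k:ℝ))*p*ϑ)
      have h2 := hceil_le ((k:ℝ)*p*ϑ)
      have h3 : β ^ ((((L:ℝ)-(k:ℝ))*p*ϑ + 1) + ((k:ℝ)*p*ϑ + 1)) = β ^ ((L:ℝ)*p*ϑ + 2) := by
        congr 1; ring
      calc β ^ (⌈((L:ℝ) - (k:ℝ))*p*ϑ⌉ : ℤ) * β ^ (⌈(k:ℝ)*p*ϑ⌉ : ℤ)
          ≤ β ^ (((L:ℝ)-(k:ℝ))*p*ϑ + 1) * β ^ ((k:ℝ)*p*ϑ + 1) :=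
            mul_le_mul h1 h2 (zpow_pos hβ0 _).le (Real.rpow_nonneg hβ0.le _)
        _ = β ^ ((((L:ℝ)-(k:ℝ))*p*ϑ + 1) + ((k:ℝ)*p*ϑ + 1)) :=
            (Real.rpow_add hβ0 _ _).symm
        _ = β ^ ((L:ℝ)*p*ϑ + 2) := h3
    have Mub : Mv ≤ ((L:ℝ)-1) * β ^ ((L:ℝ)*p*ϑ + 2) := by
      have h := Finset.sum_le_card_nsmul _ _ _ hub
      rw [Nat.card_Icc] at h
      have hcard : ((L - 1 + 1 - 1 : ℕ) : ℝ) = (L:ℝ) - 1 := by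
        have h' : (L - 1 + 1 - 1 : ℕ) = L - 1 := by omega
        rw [h', Nat.cast_sub (by omega : 1 ≤ L), Nat.cast_one]
      rw [nsmul_eq_mul] at h
      rw [hMdef]
      calc (∑ k ∈ Finset.Icc 1 (L-1),
          β ^ (⌈((L:ℝ) - (k:ℝ))*p*ϑ⌉ : ℤ) * β ^ (⌈(k:ℝ)*p*ϑ⌉ : ℤ))
          ≤ ((L - 1 + 1 - 1 : ℕ) : ℝ) * β ^ ((L:ℝ)*p*ϑ + 2) := h
        _ = ((L:ℝ)-1) * β ^ ((L:ℝ)*p*ϑ + 2) := by rw [hcard]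
    have Mlb : β ^ (((L:ℝ)-1)*(p*ϑ)) ≤ Mv := by
      have h1 : β ^ (((L:ℝ)-1)*(p*ϑ)) ≤ β ^ (⌈((L:ℝ) - ((1:ℕ):ℝ))*p*ϑ⌉ : ℤ) := by
        have h := hceil_ge (((L:ℝ) - ((1:ℕ):ℝ))*p*ϑ)
        have he : ((L:ℝ)-1)*(p*ϑ) = ((L:ℝ) - ((1:ℕ):ℝ))*p*ϑ := by push_cast; ring
        rw [he]; exact h
      have h2 : (1:ℝ) ≤ β ^ (⌈((1:ℕ):ℝ)*p*ϑ⌉ : ℤ) := by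
        apply hzpow_one
        apply Int.ceil_nonneg
        push_cast
        nlinarith
      have h3 : β ^ (⌈((L:ℝ) - ((1:ℕ):ℝ))*p*ϑ⌉ : ℤ)
          ≤ β ^ (⌈((L:ℝ) - ((1:ℕ):ℝ))*p*ϑ⌉ : ℤ) * β ^ (⌈((1:ℕ):ℝ)*p*ϑ⌉ : ℤ) :=
        le_mul_of_one_le_right (zpow_pos hβ0 _).le h2
      have h4 := Finset.single_le_sum (fun k hk => (htpos k hk).le) hmem1
      exact (h1.trans h3).trans h4
    have hlog : ((L:ℝ)-1) * Real.log 2 ≤ Real.log Mv := by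
      have h1 : Real.log (β ^ (((L:ℝ)-1)*(p*ϑ))) ≤ Real.log Mv :=
        Real.log_le_log (Real.rpow_pos_of_pos hβ0 _) Mlb
      rw [Real.log_rpow hβ0] at h1
      have h2 : Real.log 2 ≤ Real.log β := Real.log_le_log (by norm_num) hβ2
      have hL1 : (1:ℝ) ≤ (L:ℝ)-1 := by
        have : (2:ℝ) ≤ (L:ℝ) := by exact_mod_cast hL
        linarith
      have hlb : (0:ℝ) ≤ Real.log β := Real.log_nonneg (one_le_two.trans hβ2)
      have c1 : Real.log 2 ≤ p*ϑ*Real.log β :=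
        h2.trans (le_mul_of_one_le_left hlb hpϑ)
      have c2 : ((L:ℝ)-1) * Real.log 2 ≤ ((L:ℝ)-1) * (p*ϑ*Real.log β) :=
        mul_le_mul_of_nonneg_left c1 (by linarith)
      calc ((L:ℝ)-1) * Real.log 2 ≤ ((L:ℝ)-1) * (p*ϑ*Real.log β) := c2
        _ = ((L:ℝ)-1) * (p*ϑ) * Real.log β := by ring
        _ ≤ Real.log Mv := h1
    have hfin := qmcAux_case_eq hβ0 hy0 hE0 hp hMpos L hL hydef Mub hlog
      (le_add_of_le_of_nonneg (le_add_of_le_of_nonneg le_rfl hC2nn) hC3nn)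
    have hexp1 : ((if p = p then (1:ℝ) else 0)/(2*p)) = 1/(2*p) := by simp
    have hexp2 : (-min (1/p) (1/p) / 2) = -(1/(2*p)) := by
      rw [min_self, neg_div, div_div]
      ring_nf
    rw [hexp1, hexp2]
    exact hkey.trans hfin
  · -- case p ≠ q
    simp only [if_neg hpq, zero_div, Real.rpow_zero, mul_one]
    rcases lt_or_gt_of_ne hpq with hlt | hgt
    · -- p < q
      have habs : |q - p| = q - p := abs_of_pos (by linarith)
      have hz1' : z < 1 := by
        rw [hzdef, habs]
        exact Real.rpow_lt_one_of_one_lt_of_neg hβgt1 (by nlinarith)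
      have hub : ∀ k ∈ Finset.Icc 1 (L-1),
          β ^ (⌈((L:ℝ)-(k:ℝ))*p*ϑ⌉ : ℤ) * β ^ (⌈(k:ℝ)*q*ϑ⌉ : ℤ)
            ≤ β ^ ((L:ℝ)*q*ϑ + 2) * z ^ (L - k) := by
        intro k hk
        have hkm := Finset.mem_Icc.mp hk
        have h1 := hceil_le (((L:ℝ)-(k:ℝ))*p*ϑ)
        have h2 := hceil_le ((k:ℝ)*q*ϑ)
        have hcast : ((L - k : ℕ) : ℝ) = (L:ℝ) - (k:ℝ) := by
          rw [Nat.cast_sub (by omega)]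
        have h3 : β ^ ((((L:ℝ)-(k:ℝ))*p*ϑ + 1) + ((k:ℝ)*q*ϑ + 1))
            = β ^ ((L:ℝ)*q*ϑ + 2) * z ^ (L - k) := by
          rw [hzdef, habs, ← Real.rpow_natCast (β ^ (-((q-p) * ϑ))) (L-k),
            ← Real.rpow_mul hβ0.le, ← Real.rpow_add hβ0]
          congr 1
          rw [hcast]
          ring
        calc β ^ (⌈((L:ℝ)-(k:ℝ))*p*ϑ⌉ : ℤ) * β ^ (⌈(k:ℝ)*q*ϑ⌉ : ℤ)
            ≤ β ^ (((L:ℝ)-(k:ℝ))*p*ϑ + 1) * β ^ ((k:ℝ)*q*ϑ + 1) :=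
              mul_le_mul h1 h2 (zpow_pos hβ0 _).le (Real.rpow_nonneg hβ0.le _)
          _ = β ^ ((((L:ℝ)-(k:ℝ))*p*ϑ + 1) + ((k:ℝ)*q*ϑ + 1)) :=
              (Real.rpow_add hβ0 _ _).symm
          _ = β ^ ((L:ℝ)*q*ϑ + 2) * z ^ (L - k) := h3
      have hzsum : ∑ k ∈ Finset.Icc 1 (L-1), z ^ (L - k) ≤ (1-z)⁻¹ := by
        have h := qmcAux_sum_pow_le hz0.le hz1' (Finset.Icc 1 (L-1)) (fun k => L - k) 0
          (by intro a ha b hb hab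
              have ha' := Finset.mem_Icc.mp ha
              have hb' := Finset.mem_Icc.mp hb
              simp only at hab
              omega)
          (fun k _ => Nat.zero_le _)
        simpa using h
      have Mub : Mv ≤ β ^ ((L:ℝ)*q*ϑ + 2) * (1-z)⁻¹ := by
        calc Mv ≤ ∑ k ∈ Finset.Icc 1 (L-1), β ^ ((L:ℝ)*q*ϑ + 2) * z ^ (L - k) :=
              Finset.sum_le_sum hub
          _ = β ^ ((L:ℝ)*q*ϑ + 2) * ∑ k ∈ Finset.Icc 1 (L-1), z ^ (L - k) := by
              rw [Finset.mul_sum]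
          _ ≤ β ^ ((L:ℝ)*q*ϑ + 2) * (1-z)⁻¹ :=
              mul_le_mul_of_nonneg_left hzsum (Real.rpow_nonneg hβ0.le _)
      have hfin := qmcAux_case_ne hβ0 hβ1 hy0 hz1' hE0 hq hMpos L hL hydef Mub
        ((le_add_of_nonneg_left hC1nn).trans (le_add_of_le_of_nonneg le_rfl hC3nn))
      have hexp : (-min (1/p) (1/q) / 2) = -(1/(2*q)) := by
        rw [min_eq_right (one_div_le_one_div_of_le hp hlt.le), neg_div, div_div]
        ring_nf
      rw [hexp]
      exact hkey.trans hfin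
    · -- q < p
      have habs : |q - p| = p - q := by
        rw [abs_sub_comm]
        exact abs_of_pos (by linarith)
      have hz1' : z < 1 := by
        rw [hzdef, habs]
        exact Real.rpow_lt_one_of_one_lt_of_neg hβgt1 (by nlinarith)
      have hub : ∀ k ∈ Finset.Icc 1 (L-1),
          β ^ (⌈((L:ℝ)-(k:ℝ))*p*ϑ⌉ : ℤ) * β ^ (⌈(k:ℝ)*q*ϑ⌉ : ℤ)
            ≤ β ^ ((L:ℝ)*p*ϑ + 2) * z ^ k := by
        intro k hk
        have h1 := hceil_le (((L:ℝ)-(k:ℝ))*p*ϑ)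
        have h2 := hceil_le ((k:ℝ)*q*ϑ)
        have h3 : β ^ ((((L:ℝ)-(k:ℝ))*p*ϑ + 1) + ((k:ℝ)*q*ϑ + 1))
            = β ^ ((L:ℝ)*p*ϑ + 2) * z ^ k := by
          rw [hzdef, habs, ← Real.rpow_natCast (β ^ (-((p-q) * ϑ))) k,
            ← Real.rpow_mul hβ0.le, ← Real.rpow_add hβ0]
          congr 1
          ring
        calc β ^ (⌈((L:ℝ)-(k:ℝ))*p*ϑ⌉ : ℤ) * β ^ (⌈(k:ℝ)*q*ϑ⌉ : ℤ)
            ≤ β ^ (((L:ℝ)-(k:ℝ))*p*ϑ + 1) * β ^ ((k:ℝ)*q*ϑ + 1) :=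
              mul_le_mul h1 h2 (zpow_pos hβ0 _).le (Real.rpow_nonneg hβ0.le _)
          _ = β ^ ((((L:ℝ)-(k:ℝ))*p*ϑ + 1) + ((k:ℝ)*q*ϑ + 1)) :=
              (Real.rpow_add hβ0 _ _).symm
          _ = β ^ ((L:ℝ)*p*ϑ + 2) * z ^ k := h3
      have hzsum : ∑ k ∈ Finset.Icc 1 (L-1), z ^ k ≤ (1-z)⁻¹ := by
        have h := qmcAux_sum_pow_le hz0.le hz1' (Finset.Icc 1 (L-1)) (fun k => k) 0
          (fun a _ b _ hab => hab) (fun k _ => Nat.zero_le _)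
        simpa using h
      have Mub : Mv ≤ β ^ ((L:ℝ)*p*ϑ + 2) * (1-z)⁻¹ := by
        calc Mv ≤ ∑ k ∈ Finset.Icc 1 (L-1), β ^ ((L:ℝ)*p*ϑ + 2) * z ^ k :=
              Finset.sum_le_sum hub
          _ = β ^ ((L:ℝ)*p*ϑ + 2) * ∑ k ∈ Finset.Icc 1 (L-1), z ^ k := by
              rw [Finset.mul_sum]
          _ ≤ β ^ ((L:ℝ)*p*ϑ + 2) * (1-z)⁻¹ :=
              mul_le_mul_of_nonneg_left hzsum (Real.rpow_nonneg hβ0.le _)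
      have hfin := qmcAux_case_ne hβ0 hβ1 hy0 hz1' hE0 hp hMpos L hL hydef Mub
        (le_add_of_nonneg_left (add_nonneg hC1nn hC2nn))
      have hexp : (-min (1/p) (1/q) / 2) = -(1/(2*p)) := by
        rw [min_eq_left (one_div_le_one_div_of_le hq hgt.le), neg_div, div_div]
        ring_nf
      rw [hexp]
      exact hkey.trans hfin
end
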